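/- Let φ : ℝ^n → ℝ^n be cyclically monotone with φ(0) = 0, let θ : ℤ → ℝ^n be a finitely supported sequence (θ(t) = 0 for all but finitely many t), and let τ ∈ ℤ. Then ∑_{t ∈ ℤ} ⟨θ(t+τ), φ(θ(t))⟩ ≤ ∑_{t ∈ ℤ} ⟨θ(t), φ(θ(t))⟩. -/

import Mathlib

/-!
Write the claim as `0 ≤ ∑ₜ ⟪φ (θ t), θ t - θ (t + τ)⟫` and split `ℤ` into the residue classes
`r + τℤ`. Along one class, `k ↦ θ (r + k τ)` is finitely supported, so it is a finite chain that
starts and ends at `0`; closing it up costs nothing because `φ 0 = 0`, and cyclic monotonicity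
makes its contribution nonnegative.
-/

open RealInnerProductSpace

/-- A map `φ : ℝⁿ → ℝⁿ` is cyclically monotone if for every finite cyclic sequence
`x_0, …, x_N` with `x_{N+1} = x_0` one has `∑ₖ ⟨φ(x k), x k - x (k+1)⟩ ≥ 0`. -/
def CyclicallyMonotone {n : ℕ}
    (φ : EuclideanSpace ℝ (Fin n) → EuclideanSpace ℝ (Fin n)) : Prop :=
  ∀ (N : ℕ) (x : Fin (N + 1) → EuclideanSpace ℝ (Fin n)),
    0 ≤ ∑ k : Fin (N + 1), ⟪φ (x k), x k - x (k + 1)⟫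

open Finset Function

namespace Int

theorem bijective_add_mul_of_ne_zero {τ : ℤ} (hτ : τ ≠ 0) :
    Bijective fun p : Fin τ.natAbs × ℤ => (p.1 : ℤ) + p.2 * τ := by
  constructor
  · rintro ⟨r, k⟩ ⟨r', k'⟩ h
    have hmod (s : Fin τ.natAbs) (j : ℤ) : ((s : ℤ) + j * τ) % τ = s := by
      rw [Int.add_mul_emod_self_right, ← Int.emod_abs,
        Int.emod_eq_of_lt (by positivity) (by rw [Int.abs_eq_natAbs]; exact_mod_cast s.isLt)]
    have hr : r = r' := by
      have := congrArg (· % τ) h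
      simp only [hmod] at this
      exact Fin.ext (by exact_mod_cast this)
    subst hr
    simpa [hτ] using h
  · intro t
    refine ⟨(⟨(t % τ).toNat, by have := Int.emod_lt t hτ; omega⟩, t / τ), ?_⟩
    dsimp only
    rw [Int.toNat_of_nonneg (Int.emod_nonneg t hτ), Int.emod_add_ediv_mul]

theorem finsum_eq_sum_finsum_add_mul {M : Type*} [AddCommMonoid M] {f : ℤ → M}
    (hf : f.HasFiniteSupport) {τ : ℤ} (hτ : τ ≠ 0) :
    ∑ᶠ t, f t = ∑ r : Fin τ.natAbs, ∑ᶠ k : ℤ, f (r + k * τ) := by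
  let e := Equiv.ofBijective _ (bijective_add_mul_of_ne_zero hτ)
  rw [← finsum_comp_equiv e]
  exact (finsum_curry (f ∘ e) (hf.comp_of_injective e.injective)).trans
    (finsum_eq_sum_of_fintype _)

end Int

variable {n : ℕ} {φ : EuclideanSpace ℝ (Fin n) → EuclideanSpace ℝ (Fin n)}

namespace CyclicallyMonotone

theorem sum_range_nonneg (hφ : CyclicallyMonotone φ) (hφ0 : φ 0 = 0)
    (x : ℕ → EuclideanSpace ℝ (Fin n)) {N : ℕ} (hN : x N = 0) :
    0 ≤ ∑ k ∈ range N, ⟪φ (x k), x k - x (k + 1)⟫ := by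
  have := hφ N fun j => x j
  rw [Fin.sum_univ_castSucc, Fin.val_last, hN, hφ0, inner_zero_left, add_zero] at this
  rw [← Fin.sum_univ_eq_sum_range (fun k => ⟪φ (x k), x k - x (k + 1)⟫)]
  simpa only [Fin.coeSucc_eq_succ, Fin.val_succ, Fin.val_castSucc] using this

theorem finsum_nonneg (hφ : CyclicallyMonotone φ) (hφ0 : φ 0 = 0)
    {x : ℤ → EuclideanSpace ℝ (Fin n)} (hx : x.HasFiniteSupport) :
    0 ≤ ∑ᶠ k : ℤ, ⟪φ (x k), x k - x (k + 1)⟫ := by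
  obtain ⟨a, ha⟩ := Set.Finite.bddBelow hx
  obtain ⟨b, hb⟩ := Set.Finite.bddAbove hx
  set N := (b + 1 - a).toNat
  have hsupp : (support fun i : ℤ => ⟪φ (x (a + i)), x (a + i) - x (a + i + 1)⟫) ⊆
      ((range N).map (Nat.castEmbedding : ℕ ↪ ℤ) : Set ℤ) := by
    intro i hi
    have hxi : a + i ∈ support x := fun h => hi (by simp [h, hφ0])
    have hai := ha hxi
    have hib := hb hxi
    simp only [coe_map, coe_range, Set.mem_image, Set.mem_Iio, Nat.castEmbedding_apply]
    exact ⟨i.toNat, by omega, by omega⟩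
  have hxN : x (a + N) = 0 := by
    by_contra h
    have hNb := hb h
    omega
  rw [← finsum_comp_equiv (Equiv.addLeft a)]
  simp only [Equiv.coe_addLeft]
  rw [finsum_eq_sum_of_support_subset _ hsupp, sum_map]
  simpa only [Nat.castEmbedding_apply, Nat.cast_add, Nat.cast_one, add_assoc] using
    hφ.sum_range_nonneg hφ0 (fun k => x (a + k)) hxN

end CyclicallyMonotone

theorem zames_falb_time_domain_inequality {n : ℕ}
    (φ : EuclideanSpace ℝ (Fin n) → EuclideanSpace ℝ (Fin n))
    (hφ : CyclicallyMonotone φ) (hφ0 : φ 0 = 0)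
    (θ : ℤ → EuclideanSpace ℝ (Fin n)) (hθ : (Function.support θ).Finite)
    (τ : ℤ) :
    ∑ᶠ t : ℤ, ⟪θ (t + τ), φ (θ t)⟫ ≤ ∑ᶠ t : ℤ, ⟪θ t, φ (θ t)⟫ := by
  rcases eq_or_ne τ 0 with rfl | hτ
  · simp
  have hfin {g : ℤ → ℝ} (hg : ∀ t, θ t = 0 → g t = 0) : g.HasFiniteSupport :=
    hθ.subset (support_subset_iff'.2 fun t ht => hg t (notMem_support.1 ht))
  rw [← sub_nonneg, ← finsum_sub_distrib (hfin fun t ht => by simp [ht, hφ0])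
    (hfin fun t ht => by simp [ht, hφ0])]
  have hdiff (t : ℤ) : ⟪θ t, φ (θ t)⟫ - ⟪θ (t + τ), φ (θ t)⟫ = ⟪φ (θ t), θ t - θ (t + τ)⟫ := by
    rw [inner_sub_right, real_inner_comm, real_inner_comm (θ (t + τ))]
  simp_rw [hdiff]
  rw [Int.finsum_eq_sum_finsum_add_mul (hfin fun t ht => by simp [ht, hφ0]) hτ]
  refine sum_nonneg fun r _ => ?_
  simpa only [add_mul, one_mul, add_assoc] using
    hφ.finsum_nonneg hφ0 (x := fun k => θ (r + k * τ))
      (hθ.preimage (((add_right_injective _).comp (mul_left_injective₀ hτ)).injOn))
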